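/- arXiv:2108.04916 — 8 statements merged into one kernel-verified Lean document; each statement's English description precedes it below -/
import Mathlib

section
/- For every constant c₁ with 0 < c₁ < ln(4/3), if X_n denotes a binomial random variable with parameters n and p = c₁/n, then P(X_n > n p) = 1 − (1 − c₁/n)^n converges, as n → ∞, to 1 − e^{−c₁}, which is strictly less than 1/4. Consequently, the constant factor c = ln(4/3) in the condition p ≥ c/n of the main theorem cannot be replaced by any smaller constant. -/
open Finset Filter Topology Real

theorem sum_Ioc_choose_mul_pow_mul_one_sub_pow {R : Type*} [CommRing R] (p : R) (n : ℕ) :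
    ∑ k ∈ Ioc 0 n, (n.choose k : R) * p ^ k * (1 - p) ^ (n - k) = 1 - (1 - p) ^ n := by
  have htotal : ∑ k ∈ range (n + 1), (n.choose k : R) * p ^ k * (1 - p) ^ (n - k) = 1 := by
    calc _ = (p + (1 - p)) ^ n := by rw [add_pow]; exact sum_congr rfl fun k _ => by ring
      _ = 1 := by rw [add_sub_cancel, one_pow]
  have hrange : range (n + 1) = insert 0 (Ioc 0 n) := by
    ext k; simp only [mem_range, mem_insert, mem_Ioc]; omega
  rw [hrange, sum_insert (by simp)] at htotal
  simp only [Nat.choose_zero_right, Nat.cast_one, pow_zero, Nat.sub_zero, one_mul] at htotal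
  linear_combination htotal

theorem filter_range_succ_lt_natCast_eq_Ioc {x : ℝ} (hx0 : 0 ≤ x) (hx1 : x < 1) (n : ℕ) :
    (range (n + 1)).filter (fun k : ℕ => x < (k : ℝ)) = Ioc 0 n := by
  ext k
  simp only [mem_filter, mem_range, mem_Ioc, Nat.lt_succ_iff]
  constructor
  · rintro ⟨hkn, hxk⟩
    exact ⟨Nat.pos_of_ne_zero (by rintro rfl; rw [Nat.cast_zero] at hxk; linarith), hkn⟩
  · rintro ⟨hk, hkn⟩
    exact ⟨hkn, hx1.trans_le (by exact_mod_cast hk)⟩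

theorem tendsto_one_sub_div_pow_atTop (c : ℝ) :
    Tendsto (fun n : ℕ => (1 - c / n) ^ n) atTop (𝓝 (exp (-c))) := by
  simpa only [neg_div, ← sub_eq_add_neg] using tendsto_one_add_div_pow_exp (-c)

theorem log_four_div_three_lt_one_third : log (4 / 3) < 1 / 3 := by
  linarith [log_lt_sub_one_of_pos (x := 4 / 3) (by norm_num) (by norm_num)]

theorem one_sub_exp_neg_lt_quarter {c : ℝ} (hc : c < log (4 / 3)) : 1 - exp (-c) < 1 / 4 := by
  have : 3 / 4 < exp (-c) := by
    calc (3 / 4 : ℝ) = exp (-log (4 / 3)) := by rw [exp_neg, exp_log (by norm_num)]; norm_num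
      _ < exp (-c) := exp_lt_exp.mpr (neg_lt_neg hc)
  linarith

/-- For any `0 < c₁ < ln(4/3)`, with `p = c₁/n` one has
`P(X_n > n p) = 1 - (1 - c₁/n)^n → 1 - e^{-c₁} < 1/4` as `n → ∞`;
hence the constant `c = ln(4/3)` cannot be replaced by any smaller constant. -/
theorem binomial_constant_optimal
    (c₁ : ℝ) (hc₁0 : 0 < c₁) (hc₁ : c₁ < Real.log (4 / 3)) :
    (∀ n : ℕ, 1 ≤ n →
      (∑ k ∈ (Finset.range (n + 1)).filter
            (fun k : ℕ => (n : ℝ) * (c₁ / n) < (k : ℝ)),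
          (n.choose k : ℝ) * (c₁ / n) ^ k * (1 - c₁ / n) ^ (n - k))
        = 1 - (1 - c₁ / n) ^ n) ∧
    Filter.Tendsto (fun n : ℕ => 1 - (1 - c₁ / (n : ℝ)) ^ n)
      Filter.atTop (nhds (1 - Real.exp (-c₁))) ∧
    1 - Real.exp (-c₁) < 1 / 4 := by
  refine ⟨fun n hn => ?_, (tendsto_one_sub_div_pow_atTop c₁).const_sub 1,
    one_sub_exp_neg_lt_quarter hc₁⟩
  have hmean : (n : ℝ) * (c₁ / n) = c₁ := mul_div_cancel₀ c₁ (by positivity)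
  rw [hmean, filter_range_succ_lt_natCast_eq_Ioc hc₁0.le
    (hc₁.trans (log_four_div_three_lt_one_third.trans (by norm_num))),
    sum_Ioc_choose_mul_pow_mul_one_sub_pow]
end

section
/- Let X be a random variable with the binomial distribution with parameters n and p, let c := ln(4/3), and let b := (1 − e^{−c})/c = 1/(4 ln(4/3)) = 0.86901… . If 0 ≤ p ≤ c/n, then P(X > E[X]) = 1 − (1−p)^n ≥ max(1, b n) · p. -/
/-!
Since `n p ≤ c < 1`, the event `X > n p` is `X ≥ 1`, whose probability is `1 - (1 - p)^n`.
The map `p ↦ 1 - (1 - p)^n` is concave on `[0, 1]`, so on `[0, c/n]` it lies above its chord,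
whose slope is `(1 - (1 - c/n)^n) / (c/n) ≥ (1 - e^{-c}) n / c = b n`. The bound by `p` itself
is `(1 - p)^n ≤ 1 - p`.
-/

open Finset Real

theorem sum_filter_lt_binomial_eq_one_sub_pow (n : ℕ) (p : ℝ) {a : ℝ} (ha₀ : 0 ≤ a)
    (ha₁ : a < 1) :
    ∑ k ∈ (range (n + 1)).filter (fun k : ℕ => a < k),
        (n.choose k : ℝ) * p ^ k * (1 - p) ^ (n - k) = 1 - (1 - p) ^ n := by
  have total : ∑ k ∈ range (n + 1), (n.choose k : ℝ) * p ^ k * (1 - p) ^ (n - k) = 1 := by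
    have := (add_pow p (1 - p) n).symm
    rw [add_sub_cancel, one_pow] at this
    exact (sum_congr rfl fun k _ => by ring).trans this
  rw [sum_range_succ'] at total
  rw [sum_filter, sum_range_succ', if_neg (by simpa using ha₀.not_gt), add_zero]
  have h_pos (k : ℕ) : a < ((k + 1 : ℕ) : ℝ) := by push_cast; linarith [k.cast_nonneg (α := ℝ)]
  simp only [h_pos, if_true]
  simp only [Nat.choose_zero_right, Nat.cast_one, pow_zero, Nat.sub_zero, one_mul] at total
  linarith

theorem mul_one_sub_one_sub_pow_le {n : ℕ} {p q : ℝ} (hp : 0 ≤ p) (hpq : p ≤ q) (hq : q ≤ 1) :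
    p * (1 - (1 - q) ^ n) ≤ q * (1 - (1 - p) ^ n) := by
  obtain rfl | hq₀ := (hp.trans hpq).eq_or_lt
  · simp [le_antisymm hpq hp]
  set t := p / q
  have ht₀ : 0 ≤ t := div_nonneg hp hq₀.le
  have ht₁ : t ≤ 1 := (div_le_one hq₀).2 hpq
  have hp_eq : 1 - p = (1 - t) * 1 + t * (1 - q) := by
    simp only [t]; field_simp; ring
  have convex : (1 - p) ^ n ≤ (1 - t) * 1 ^ n + t * (1 - q) ^ n := by
    rw [hp_eq]
    exact (convexOn_pow n).2 (Set.mem_Ici.2 zero_le_one) (Set.mem_Ici.2 (by linarith))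
      (by linarith) ht₀ (by ring)
  have above_chord : t * (1 - (1 - q) ^ n) ≤ 1 - (1 - p) ^ n := by
    rw [one_pow] at convex; linarith
  calc p * (1 - (1 - q) ^ n) = q * (t * (1 - (1 - q) ^ n)) := by
        simp only [t]; field_simp
    _ ≤ q * (1 - (1 - p) ^ n) := by gcongr

theorem one_sub_exp_neg_div_mul_le_one_sub_one_sub_pow {n : ℕ} {c p : ℝ} (hc : 0 < c)
    (hcn : c ≤ n) (hp : 0 ≤ p) (hpc : p ≤ c / n) :
    (1 - exp (-c)) / c * n * p ≤ 1 - (1 - p) ^ n := by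
  have hn : (0 : ℝ) < n := hc.trans_le hcn
  have hq : c / n ≤ 1 := (div_le_one hn).2 hcn
  have chord := mul_one_sub_one_sub_pow_le (n := n) hp hpc hq
  have hexp := one_sub_div_pow_le_exp_neg hcn
  calc (1 - exp (-c)) / c * n * p = n / c * (p * (1 - exp (-c))) := by ring
    _ ≤ n / c * (p * (1 - (1 - c / n) ^ n)) := by gcongr
    _ ≤ n / c * (c / n * (1 - (1 - p) ^ n)) := by gcongr
    _ = 1 - (1 - p) ^ n := by field_simp

theorem binomial_prob_gt_mean_small_p_general
    (n : ℕ) (p : ℝ) (hp0 : 0 ≤ p)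
    (hpc : p ≤ Real.log (4 / 3) / n) :
    (∑ k ∈ (Finset.range (n + 1)).filter (fun k : ℕ => (n : ℝ) * p < (k : ℝ)),
        (n.choose k : ℝ) * p ^ k * (1 - p) ^ (n - k)) = 1 - (1 - p) ^ n ∧
    max 1 ((1 - Real.exp (-Real.log (4 / 3))) / Real.log (4 / 3) * n) * p
      ≤ 1 - (1 - p) ^ n := by
  obtain rfl | hn := n.eq_zero_or_pos
  · obtain rfl : p = 0 := le_antisymm (by simpa using hpc) hp0
    simp [sum_filter]
  have hn₁ : (1 : ℝ) ≤ n := by exact_mod_cast hn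
  have hc₀ : 0 < log (4 / 3) := log_pos (by norm_num)
  have hc₁ : log (4 / 3) < 1 := by
    linarith [log_lt_sub_one_of_pos (by norm_num : (0 : ℝ) < 4 / 3) (by norm_num)]
  have hnp : n * p ≤ log (4 / 3) := by
    rw [le_div_iff₀ (by positivity)] at hpc; linarith
  have hp₁ : p ≤ 1 := by nlinarith
  refine ⟨sum_filter_lt_binomial_eq_one_sub_pow n p (by positivity) (by linarith),
    (max_mul_of_nonneg _ _ hp0).trans_le (max_le ?_ ?_)⟩
  · linarith [pow_le_of_le_one (by linarith : 0 ≤ 1 - p) (by linarith) hn.ne']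
  · exact one_sub_exp_neg_div_mul_le_one_sub_one_sub_pow hc₀ (by linarith) hp0 hpc

/-- If `0 ≤ p ≤ c/n` with `c := ln(4/3)` and `b := (1 - e^{-c})/c`, then
`P(X > E X) = 1 - (1-p)^n ≥ max(1, b n) p`. -/
theorem binomial_prob_gt_mean_small_p
    (n : ℕ) (hn : 0 < n) (p : ℝ) (hp0 : 0 ≤ p)
    (hpc : p ≤ Real.log (4 / 3) / n) :
    (∑ k ∈ (Finset.range (n + 1)).filter (fun k : ℕ => (n : ℝ) * p < (k : ℝ)),
        (n.choose k : ℝ) * p ^ k * (1 - p) ^ (n - k)) = 1 - (1 - p) ^ n ∧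
    max 1 ((1 - Real.exp (-Real.log (4 / 3))) / Real.log (4 / 3) * n) * p
      ≤ 1 - (1 - p) ^ n :=
  binomial_prob_gt_mean_small_p_general n p hp0 hpc
end

section
/- Let m ≥ 2 and j ≥ m be integers. Then P(X_{j+1, (m−1)/(j+1)} ≥ m) > P(X_{j, (m−1)/j} ≥ m), where X_{n,p} denotes a binomial random variable with parameters n and p. That is, the probability that a binomial random variable with parameters j and (m−1)/j is at least m is strictly increasing in the integer j ≥ m. -/
/-!
Write `T n m` for the tail `P(Bin(n, p) ≥ m)` and `b n ν` for `P(Bin(n, p) = ν)`, both polynomials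
in `p`, and put `ν = m - 1`. Pascal's rule gives `T (n + 1) (ν + 1) = T n (ν + 1) + p * b n ν`, so
the polynomial `g = T n (ν + 1) + (ν - n p) * b n ν` takes the value `T n (ν + 1)` at `p = ν / n`
and the value `T (n + 1) (ν + 1)` at `p = ν / (n + 1)`. Its derivative factors as
`choose n ν * p ^ (ν - 1) * (1 - p) ^ (n - ν - 1) * (ν - n p) * (ν - (n + 1) p)`, which is negative
strictly between these two points; hence `g` decreases from the second value to the first.
-/

open Polynomial Finset

namespace bernsteinPolynomial

variable {R : Type*} [CommRing R]

theorem eval_eq (n ν : ℕ) (x : R) :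
    (bernsteinPolynomial R n ν).eval x = n.choose ν * x ^ ν * (1 - x) ^ (n - ν) := by
  simp [bernsteinPolynomial]

theorem succ_zero (n : ℕ) :
    bernsteinPolynomial R (n + 1) 0 = (1 - X) * bernsteinPolynomial R n 0 := by
  simp [bernsteinPolynomial, pow_succ, mul_comm]

theorem succ_succ (n ν : ℕ) :
    bernsteinPolynomial R (n + 1) (ν + 1) =
      X * bernsteinPolynomial R n ν + (1 - X) * bernsteinPolynomial R n (ν + 1) := by
  rcases lt_or_ge ν n with h | h
  · obtain ⟨r, rfl⟩ := Nat.exists_eq_add_of_lt h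
    have e₁ : ν + r + 1 + 1 - (ν + 1) = r + 1 := by omega
    have e₂ : ν + r + 1 - ν = r + 1 := by omega
    have e₃ : ν + r + 1 - (ν + 1) = r := by omega
    simp only [bernsteinPolynomial, Nat.choose_succ_succ, e₁, e₂, e₃]
    push_cast
    ring
  · have e₁ : n + 1 - (ν + 1) = 0 := by omega
    have e₂ : n - ν = 0 := by omega
    simp only [bernsteinPolynomial, Nat.choose_succ_succ, e₁, e₂,
      Nat.choose_eq_zero_of_lt (Nat.lt_succ_of_le h)]
    push_cast
    ring

theorem sum_range_degree_succ (n ν : ℕ) :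
    ∑ k ∈ range (ν + 1), bernsteinPolynomial R (n + 1) k =
      ∑ k ∈ range (ν + 1), bernsteinPolynomial R n k - X * bernsteinPolynomial R n ν := by
  induction ν with
  | zero => simp only [zero_add, range_one, sum_singleton, succ_zero]; ring
  | succ ν ih =>
    rw [sum_range_succ, ih, succ_succ, sum_range_succ _ (ν + 1)]
    ring

theorem derivative_sum_range (n ν : ℕ) :
    derivative (∑ k ∈ range (ν + 1), bernsteinPolynomial R n k) =
      -(n * bernsteinPolynomial R (n - 1) ν) := by
  induction ν with
  | zero => simp [derivative_zero]
  | succ ν ih =>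
    rw [sum_range_succ, derivative_add, ih, derivative_succ]
    ring

end bernsteinPolynomial

section CommRing

variable (R : Type*) [CommRing R]

noncomputable def bernsteinTail (n m : ℕ) : R[X] :=
  ∑ k ∈ Icc m n, bernsteinPolynomial R n k

variable {R}

namespace bernsteinTail

theorem eq_one_sub {n m : ℕ} (h : m ≤ n + 1) :
    bernsteinTail R n m = 1 - ∑ k ∈ range m, bernsteinPolynomial R n k := by
  rw [← bernsteinPolynomial.sum R n, ← sum_range_add_sum_Ico _ h, Ico_add_one_right_eq_Icc,
    bernsteinTail]
  ring

theorem eval_eq (n m : ℕ) (x : R) :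
    (bernsteinTail R n m).eval x = ∑ k ∈ Icc m n, n.choose k * x ^ k * (1 - x) ^ (n - k) := by
  simp [bernsteinTail, eval_finsetSum, bernsteinPolynomial.eval_eq]

theorem succ_succ {n ν : ℕ} (h : ν ≤ n) :
    bernsteinTail R (n + 1) (ν + 1) =
      bernsteinTail R n (ν + 1) + X * bernsteinPolynomial R n ν := by
  rw [eq_one_sub (Nat.succ_le_succ h), eq_one_sub (by omega),
    bernsteinPolynomial.sum_range_degree_succ]
  ring

theorem derivative_eq {n ν : ℕ} (h : ν ≤ n) :
    derivative (bernsteinTail R n (ν + 1)) = n * bernsteinPolynomial R (n - 1) ν := by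
  rw [eq_one_sub (by omega), derivative_sub, derivative_one,
    bernsteinPolynomial.derivative_sum_range]
  ring

end bernsteinTail

variable (R) in
noncomputable def tailInterpolant (n ν : ℕ) : R[X] :=
  bernsteinTail R n (ν + 1) + ((ν : R[X]) - (n : R[X]) * X) * bernsteinPolynomial R n ν

theorem derivative_tailInterpolant {n ν : ℕ} (hν : 0 < ν) (hνn : ν < n) :
    derivative (tailInterpolant R n ν) =
      (n.choose ν : R[X]) * X ^ (ν - 1) * (1 - X) ^ (n - ν - 1) * ((ν : R[X]) - (n : R[X]) * X) *
        ((ν : R[X]) - ((n : R[X]) + 1) * X) := by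
  obtain ⟨μ, rfl⟩ : ∃ μ, ν = μ + 1 := ⟨ν - 1, by omega⟩
  obtain ⟨r, rfl⟩ : ∃ r, n = μ + 1 + r + 1 := ⟨n - μ - 2, by omega⟩
  rw [tailInterpolant, derivative_add, bernsteinTail.derivative_eq hνn.le, derivative_mul,
    bernsteinPolynomial.derivative_succ]
  simp only [bernsteinPolynomial, derivative_sub, derivative_natCast, derivative_mul, derivative_X]
  have e₁ : μ + 1 + r + 1 - 1 = μ + 1 + r := by omega
  have e₂ : μ + 1 + r + 1 - (μ + 1) = r + 1 := by omega
  have e₃ : μ + 1 + r - (μ + 1) = r := by omega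
  have e₄ : μ + 1 + r - μ = r + 1 := by omega
  simp only [e₁, e₂, e₃, e₄, Nat.add_sub_cancel]
  have c₁ := congrArg (Nat.cast : ℕ → R[X]) (Nat.add_one_mul_choose_eq (μ + 1 + r) μ)
  have c₂ := congrArg (Nat.cast : ℕ → R[X]) (Nat.choose_mul_succ_eq (μ + 1 + r) (μ + 1))
  rw [e₂] at c₂
  push_cast at c₁ c₂ ⊢
  linear_combination ((μ + 1 : R[X]) - (μ + 1 + r + 1 : R[X]) * X) * X ^ μ * (1 - X) ^ (r + 1) * c₁
    + (1 - ((μ + 1 : R[X]) - (μ + 1 + r + 1 : R[X]) * X)) * X ^ (μ + 1) * (1 - X) ^ r * c₂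

end CommRing

section Field

variable {K : Type*} [Field K]

theorem tailInterpolant_eval_div {n : ℕ} (ν : ℕ) (hn : (n : K) ≠ 0) :
    (tailInterpolant K n ν).eval ((ν : K) / n) =
      (bernsteinTail K n (ν + 1)).eval ((ν : K) / n) := by
  simp [tailInterpolant, mul_div_cancel₀ _ hn]

theorem tailInterpolant_eval_div_succ {n ν : ℕ} (hν : ν ≤ n) (hn : (n : K) + 1 ≠ 0) :
    (tailInterpolant K n ν).eval ((ν : K) / (n + 1)) =
      (bernsteinTail K (n + 1) (ν + 1)).eval ((ν : K) / (n + 1)) := by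
  rw [bernsteinTail.succ_succ hν, tailInterpolant]
  simp only [eval_add, eval_mul, eval_sub, eval_natCast, eval_X]
  field_simp
  ring

end Field

theorem tailInterpolant_strictAntiOn {n ν : ℕ} (hν : 0 < ν) (hνn : ν < n) :
    StrictAntiOn (fun x ↦ (tailInterpolant ℝ n ν).eval x)
      (Set.Icc ((ν : ℝ) / (n + 1)) (ν / n)) := by
  refine strictAntiOn_of_deriv_neg (convex_Icc _ _) (Polynomial.continuousOn _) fun x hx ↦ ?_
  rw [interior_Icc] at hx
  obtain ⟨hlo, hhi⟩ := hx
  have hn : (0 : ℝ) < n := by exact_mod_cast hν.trans hνn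
  have hνn' : (ν : ℝ) < n := by exact_mod_cast hνn
  rw [div_lt_iff₀ (by positivity)] at hlo
  rw [lt_div_iff₀ hn] at hhi
  have hx₀ : 0 < x := by nlinarith
  have hx₁ : 0 < 1 - x := by nlinarith
  have hchoose : (0 : ℝ) < n.choose ν := by exact_mod_cast Nat.choose_pos hνn.le
  rw [Polynomial.deriv, derivative_tailInterpolant hν hνn]
  simp only [eval_mul, eval_sub, eval_pow, eval_natCast, eval_X, eval_one, eval_add]
  have hpos : 0 < (n.choose ν : ℝ) * x ^ (ν - 1) * (1 - x) ^ (n - ν - 1) * (ν - n * x) := by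
    have : 0 < (ν : ℝ) - n * x := by linarith
    positivity
  exact mul_neg_of_pos_of_neg hpos (by linarith)

theorem bernsteinTail_eval_lt {n ν : ℕ} (hν : 0 < ν) (hνn : ν < n) :
    (bernsteinTail ℝ n (ν + 1)).eval ((ν : ℝ) / n) <
      (bernsteinTail ℝ (n + 1) (ν + 1)).eval ((ν : ℝ) / (n + 1)) := by
  have hn : (0 : ℝ) < n := by exact_mod_cast hν.trans hνn
  have hlt : (ν : ℝ) / (n + 1) < ν / n :=
    div_lt_div_of_pos_left (by exact_mod_cast hν) hn (lt_add_one _)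
  rw [← tailInterpolant_eval_div ν hn.ne', ← tailInterpolant_eval_div_succ hνn.le (by positivity)]
  exact tailInterpolant_strictAntiOn hν hνn (Set.left_mem_Icc.2 hlt.le)
    (Set.right_mem_Icc.2 hlt.le) hlt

/-- For integers `m ≥ 2` and `j ≥ m`, `P(X_{j+1,(m-1)/(j+1)} ≥ m) > P(X_{j,(m-1)/j} ≥ m)`:
the probability that a binomial with parameters `j` and `(m-1)/j` is at least `m` is
strictly increasing in the integer `j ≥ m`. -/
theorem binomial_tail_strict_mono_in_n
    (m j : ℕ) (hm : 2 ≤ m) (hj : m ≤ j) :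
    (∑ k ∈ Finset.Icc m j,
        (j.choose k : ℝ) * (((m : ℝ) - 1) / j) ^ k * (1 - ((m : ℝ) - 1) / j) ^ (j - k))
    < ∑ k ∈ Finset.Icc m (j + 1),
        ((j + 1).choose k : ℝ) * (((m : ℝ) - 1) / (j + 1)) ^ k
          * (1 - ((m : ℝ) - 1) / (j + 1)) ^ (j + 1 - k) := by
  obtain ⟨ν, rfl⟩ : ∃ ν, m = ν + 1 := ⟨m - 1, by omega⟩
  have h := bernsteinTail_eval_lt (n := j) (ν := ν) (by omega) (by omega)
  simpa [bernsteinTail.eval_eq] using h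
end

section
/- Let m ≥ 2 and n ≥ m be integers, and let X_{n,(m−1)/n} denote a binomial random variable with parameters n and (m−1)/n. Then P(X_{n,(m−1)/n} ≥ m) ≥ ((m−1)/m)^m, and the inequality is strict unless n = m. -/
/-!
`P(X_{n,(m-1)/n} ≥ m)` is strictly increasing in `n ≥ m`; at `n = m` it equals `((m-1)/m)^m`.
For the step `n → n + 1` put `q = (m-1)/n` and `q' = (m-1)/(n+1)`. At the fixed parameter `q`,
one extra trial adds `q · P(X_{n,q} = m-1)` to the tail. Lowering the parameter from `q` to `q'`
loses strictly less than `(q - q')` times the derivative of the tail at `q`, because that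
derivative, `(n+1) · P(X_{n,p} = m-1)`, increases in `p` up to its mode `(m-1)/n = q`.
Since `(q - q')(n + 1) = q`, the loss is smaller than the gain.
-/

open Finset Polynomial

theorem bernsteinPolynomial_succ_succ {R : Type*} [CommRing R] (n k : ℕ) :
    bernsteinPolynomial R (n + 1) (k + 1) =
      X * bernsteinPolynomial R n k + (1 - X) * bernsteinPolynomial R n (k + 1) := by
  rcases lt_or_ge k n with hkn | hnk
  · obtain ⟨j, rfl⟩ := Nat.exists_eq_add_of_lt hkn
    simp only [bernsteinPolynomial, Nat.choose_succ_succ, Nat.cast_add,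
      show k + j + 1 + 1 - (k + 1) = j + 1 by omega, show k + j + 1 - k = j + 1 by omega,
      show k + j + 1 - (k + 1) = j by omega]
    ring
  · rw [bernsteinPolynomial.eq_zero_of_lt R (Nat.lt_succ_of_le hnk)]
    simp only [bernsteinPolynomial, Nat.choose_succ_succ,
      Nat.choose_eq_zero_of_lt (Nat.lt_succ_of_le hnk), add_zero, Nat.succ_sub_succ]
    ring

theorem strictMonoOn_pow_mul_one_sub_pow {a b : ℕ} (ha : a ≠ 0) (hb : b ≠ 0) :
    StrictMonoOn (fun t : ℝ => t ^ a * (1 - t) ^ b) (Set.Icc 0 (a / (a + b))) := by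
  obtain ⟨a, rfl⟩ := Nat.exists_eq_add_one_of_ne_zero ha
  obtain ⟨b, rfl⟩ := Nat.exists_eq_add_one_of_ne_zero hb
  refine strictMonoOn_of_deriv_pos (convex_Icc _ _) (by fun_prop) fun t ht => ?_
  rw [interior_Icc, Set.mem_Ioo, lt_div_iff₀ (by positivity)] at ht
  obtain ⟨ht, hmode⟩ := ht
  push_cast at hmode
  have hderiv : HasDerivAt (fun t : ℝ => t ^ (a + 1) * (1 - t) ^ (b + 1))
      (t ^ a * (1 - t) ^ b * ((a + 1) - (a + b + 2) * t)) t := by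
    refine ((hasDerivAt_pow _ t).fun_mul
      (((hasDerivAt_id t).const_sub 1).fun_pow _)).congr_deriv ?_
    simp only [Nat.add_sub_cancel, id]
    push_cast
    ring
  have h1t : 0 < 1 - t := by nlinarith
  have hslope : 0 < (a + 1 : ℝ) - (a + b + 2) * t := by linarith
  rw [hderiv.deriv]
  positivity

theorem strictMonoOn_eval_bernsteinPolynomial {n m : ℕ} (hm : m ≠ 0) (hmn : m < n) :
    StrictMonoOn (fun t => (bernsteinPolynomial ℝ n m).eval t) (Set.Icc 0 (m / n)) := by
  have hmode : ((m : ℝ) + (n - m : ℕ)) = n := by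
    rw [← Nat.cast_add, Nat.add_sub_cancel' hmn.le]
  have hmono := strictMonoOn_pow_mul_one_sub_pow hm (Nat.sub_ne_zero_of_lt hmn)
  rw [hmode] at hmono
  have hchoose : (0 : ℝ) < n.choose m := by exact_mod_cast Nat.choose_pos hmn.le
  intro s hs t ht hst
  simpa only [bernsteinPolynomial, eval_mul, eval_natCast, eval_pow, eval_X, eval_sub, eval_one,
    mul_assoc] using mul_lt_mul_of_pos_left (hmono hs ht hst) hchoose

/-- `binomialTail n m p = P(X_{n,p} ≥ m)`: the Bernstein polynomial `bernsteinPolynomial ℝ n k`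
evaluated at `p` is `P(X_{n,p} = k)`. -/
noncomputable def binomialTail (n m : ℕ) (p : ℝ) : ℝ :=
  ∑ k ∈ Icc m n, (bernsteinPolynomial ℝ n k).eval p

section binomialTail

variable {n m : ℕ} (p : ℝ)

theorem binomialTail_eq_sum_choose :
    binomialTail n m p = ∑ k ∈ Icc m n, (n.choose k : ℝ) * p ^ k * (1 - p) ^ (n - k) := by
  simp [binomialTail, bernsteinPolynomial]

theorem binomialTail_self : binomialTail n n p = p ^ n := by
  simp [binomialTail, bernsteinPolynomial]

theorem binomialTail_eq_sum_Icc {N : ℕ} (hnN : n ≤ N) :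
    binomialTail n m p = ∑ k ∈ Icc m N, (bernsteinPolynomial ℝ n k).eval p := by
  refine sum_subset (Icc_subset_Icc_right hnN) fun k hk hkn => ?_
  rw [bernsteinPolynomial.eq_zero_of_lt ℝ (by simp_all), eval_zero]

theorem binomialTail_eq_add (hmn : m ≤ n) :
    binomialTail n m p = (bernsteinPolynomial ℝ n m).eval p + binomialTail n (m + 1) p := by
  rw [binomialTail, Icc_eq_cons_Ioc hmn, sum_cons, ← Icc_add_one_left_eq_Ioc, binomialTail]

theorem binomialTail_succ_succ_eq_sum :
    binomialTail (n + 1) (m + 1) p =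
      ∑ k ∈ Icc m n, (bernsteinPolynomial ℝ (n + 1) (k + 1)).eval p := by
  rw [binomialTail, ← map_add_right_Icc, sum_map]
  rfl

theorem binomialTail_succ_succ :
    binomialTail (n + 1) (m + 1) p =
      p * binomialTail n m p + (1 - p) * binomialTail n (m + 1) p := by
  have hshift : binomialTail n (m + 1) p =
      ∑ k ∈ Icc m n, (bernsteinPolynomial ℝ n (k + 1)).eval p := by
    rw [binomialTail_eq_sum_Icc p n.le_succ, ← map_add_right_Icc, sum_map]
    rfl
  rw [binomialTail_succ_succ_eq_sum, hshift, binomialTail, mul_sum, mul_sum, ← sum_add_distrib]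
  simp only [bernsteinPolynomial_succ_succ, eval_add, eval_mul, eval_X, eval_sub, eval_one]

theorem binomialTail_succ_succ_eq_add (hmn : m ≤ n) :
    binomialTail (n + 1) (m + 1) p =
      binomialTail n (m + 1) p + p * (bernsteinPolynomial ℝ n m).eval p := by
  rw [binomialTail_succ_succ, binomialTail_eq_add p hmn]
  ring

theorem hasDerivAt_binomialTail_succ_succ (hmn : m ≤ n) :
    HasDerivAt (binomialTail (n + 1) (m + 1))
      ((n + 1) * (bernsteinPolynomial ℝ n m).eval p) p := by
  have hpoly : binomialTail (n + 1) (m + 1) =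
      fun t => (∑ k ∈ Icc m n, bernsteinPolynomial ℝ (n + 1) (k + 1)).eval t := by
    ext t
    rw [binomialTail_succ_succ_eq_sum, eval_finsetSum]
  have htelescope : ∑ k ∈ Icc m n, (bernsteinPolynomial ℝ n k - bernsteinPolynomial ℝ n (k + 1))
      = bernsteinPolynomial ℝ n m := by
    rw [← neg_inj, ← sum_neg_distrib]
    simp only [neg_sub]
    rw [sum_Icc_sub hmn, bernsteinPolynomial.eq_zero_of_lt ℝ n.lt_succ_self, zero_sub]
  rw [hpoly]
  refine (Polynomial.hasDerivAt _ p).congr_deriv ?_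
  rw [derivative_sum]
  simp [bernsteinPolynomial.derivative_succ_aux, ← mul_sum, htelescope]

end binomialTail

theorem binomialTail_lt_binomialTail_succ {m n : ℕ} (hm : m ≠ 0) (hmn : m < n) :
    binomialTail n (m + 1) (m / n) < binomialTail (n + 1) (m + 1) (m / (n + 1)) := by
  set q : ℝ := m / n
  set q' : ℝ := m / (n + 1)
  have hn : (0 : ℝ) < n := by exact_mod_cast hm.bot_lt.trans hmn
  have hq' : 0 < q' := by positivity
  have hq'q : q' < q := div_lt_div_of_pos_left (by positivity) hn (lt_add_one _)
  set T' : ℝ → ℝ := fun t => (n + 1) * (bernsteinPolynomial ℝ n m).eval t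
  obtain ⟨c, ⟨hq'c, hcq⟩, hslope⟩ :=
    exists_hasDerivAt_eq_slope (binomialTail (n + 1) (m + 1)) T' hq'q
      (fun t _ => (hasDerivAt_binomialTail_succ_succ t hmn.le).continuousAt.continuousWithinAt)
      (fun t _ => hasDerivAt_binomialTail_succ_succ t hmn.le)
  rw [eq_div_iff (sub_pos.2 hq'q).ne'] at hslope
  have hT' : T' c < T' q := mul_lt_mul_of_pos_left
    (strictMonoOn_eval_bernsteinPolynomial hm hmn ⟨(hq'.trans hq'c).le, hcq.le⟩
      ⟨(hq'.trans hq'q).le, le_rfl⟩ hcq) (by positivity)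
  have hgap : (q - q') * T' q = q * (bernsteinPolynomial ℝ n m).eval q := by
    simp only [T', q, q']
    field_simp
    ring
  have hloss := mul_lt_mul_of_pos_left hT' (sub_pos.2 hq'q)
  linarith [binomialTail_succ_succ_eq_add q hmn.le]

theorem strictMono_binomialTail_at_mode {m : ℕ} (hm : m ≠ 0) :
    StrictMono fun k : ℕ => binomialTail (m + 1 + k) (m + 1) (m / (m + 1 + k : ℕ)) :=
  strictMono_nat_of_lt_succ fun k => by
    simpa only [← add_assoc, Nat.cast_add_one] using
      binomialTail_lt_binomialTail_succ hm (by omega : m < m + 1 + k)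

/-- For integers `m ≥ 2` and `n ≥ m`, `P(X_{n,(m-1)/n} ≥ m) ≥ ((m-1)/m)^m`,
with strict inequality unless `n = m`. -/
theorem binomial_tail_ge_of_ge
    (m n : ℕ) (hm : 2 ≤ m) (hn : m ≤ n) :
    ((((m : ℝ) - 1) / m) ^ m
      ≤ ∑ k ∈ Finset.Icc m n,
          (n.choose k : ℝ) * (((m : ℝ) - 1) / n) ^ k * (1 - ((m : ℝ) - 1) / n) ^ (n - k)) ∧
    (n ≠ m →
      (((m : ℝ) - 1) / m) ^ m
        < ∑ k ∈ Finset.Icc m n,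
            (n.choose k : ℝ) * (((m : ℝ) - 1) / n) ^ k * (1 - ((m : ℝ) - 1) / n) ^ (n - k)) := by
  obtain ⟨m, rfl⟩ : ∃ m', m = m' + 1 := ⟨m - 1, by omega⟩
  obtain ⟨k, rfl⟩ := Nat.exists_eq_add_of_le hn
  have hmono := strictMono_binomialTail_at_mode (m := m) (by omega)
  have hcast : ((m + 1 : ℕ) : ℝ) - 1 = m := by push_cast; ring
  have hbase : ((m : ℝ) / (m + 1 : ℕ)) ^ (m + 1)
      = binomialTail (m + 1 + 0) (m + 1) (m / (m + 1 + 0 : ℕ)) := by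
    rw [add_zero, binomialTail_self]
  rw [hcast, ← binomialTail_eq_sum_choose, hbase]
  exact ⟨hmono.monotone k.zero_le, fun hk => hmono (by omega)⟩
end

section
/- Let X be a binomial random variable with parameters n and p, where n ≥ 3 is an integer and 1 ≤ n p < 2. Then P(X > n p) = 1 − (1−p)^n − n (1−p)^{n−1} p > 1/4. -/
/-!
`P(X > np) = P(X ≥ 2) = 1 - P(X ≤ 1)`, and `P(X ≤ 1) = (1-p)^n + np(1-p)^(n-1)` is decreasing
in `p` (its derivative is `-n(n-1)p(1-p)^(n-2)`). Hence for `p ≥ 1/n` it is at most its value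
`(1-1/n)^(n-1) (2-1/n)` at `p = 1/n`. With `m = n - 1` this equals `(2 - 1/(m+1)) / (1+1/m)^m`,
and the first four terms of the binomial expansion of `(1+1/m)^m` already push it below `3/4`:
the margin is a positive multiple of `(m-1)^2`.
-/

open Finset

theorem sum_Ico_two_choose_mul_pow_mul_pow {R : Type*} [CommRing R] (n : ℕ) (p : R) :
    ∑ k ∈ Ico 2 (n + 1), (n.choose k : R) * p ^ k * (1 - p) ^ (n - k)
      = 1 - (1 - p) ^ n - n * (1 - p) ^ (n - 1) * p := by
  rcases Nat.eq_zero_or_pos n with rfl | hn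
  · simp
  have hsum : ∑ k ∈ range (n + 1), (n.choose k : R) * p ^ k * (1 - p) ^ (n - k) = 1 := by
    have h := add_pow p (1 - p) n
    rw [add_sub_cancel, one_pow] at h
    exact (sum_congr rfl fun k _ => by ring).trans h.symm
  rw [range_eq_Ico, sum_eq_sum_Ico_succ_bot (by omega), sum_eq_sum_Ico_succ_bot (by omega)] at hsum
  simp only [Nat.choose_zero_right, Nat.choose_one_right, pow_zero, pow_one, Nat.sub_zero,
    Nat.cast_one, zero_add] at hsum
  linear_combination hsum

theorem filter_range_lt_natCast_eq_Ico_two (t : ℝ) (h1 : 1 ≤ t) (h2 : t < 2) (N : ℕ) :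
    (range N).filter (fun k : ℕ => t < k) = Ico 2 N := by
  ext k
  simp only [mem_filter, mem_range, mem_Ico]
  constructor
  · rintro ⟨hk, hlt⟩
    exact ⟨by exact_mod_cast (lt_of_le_of_lt h1 hlt), hk⟩
  · rintro ⟨h2k, hk⟩
    exact ⟨hk, h2.trans_le (by exact_mod_cast h2k)⟩

theorem binomial_cubic_le_one_add_pow {x : ℝ} (hx : 0 ≤ x) (m : ℕ) :
    1 + m * x + m * (m - 1) / 2 * x ^ 2 + m * (m - 1) * (m - 2) / 6 * x ^ 3 ≤ (1 + x) ^ m := by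
  induction m with
  | zero => simp
  | succ m ih =>
    have hm : (0 : ℝ) ≤ m * (m - 1) * (m - 2) := by
      rcases (by omega : m ≤ 2 ∨ 3 ≤ m) with hm | hm
      · interval_cases m <;> norm_num
      · have : (3 : ℝ) ≤ m := by exact_mod_cast hm
        have : (0 : ℝ) ≤ m - 1 := by linarith
        have : (0 : ℝ) ≤ m - 2 := by linarith
        positivity
    -- the two sides differ by `m (m-1) (m-2) / 6 * x ^ 4`
    calc _ ≤ (1 + x) *
          (1 + m * x + m * (m - 1) / 2 * x ^ 2 + m * (m - 1) * (m - 2) / 6 * x ^ 3) := by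
          push_cast; nlinarith [pow_nonneg hx 4]
      _ ≤ (1 + x) ^ (m + 1) := by
          rw [pow_succ' (1 + x) m]
          exact mul_le_mul_of_nonneg_left ih (by linarith)

def binomialProbLeOne (n : ℕ) (p : ℝ) : ℝ := (1 - p) ^ n + n * (1 - p) ^ (n - 1) * p

theorem binomialProbLeOne_antitoneOn {n : ℕ} (hn : 2 ≤ n) :
    AntitoneOn (binomialProbLeOne n) (Set.Icc 0 1) := by
  obtain ⟨m, rfl⟩ : ∃ m, n = m + 2 := ⟨n - 2, by omega⟩
  have hderiv (p : ℝ) : HasDerivAt (binomialProbLeOne (m + 2))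
      (-((m + 2) * (m + 1) * (1 - p) ^ m * p)) p := by
    have hq : HasDerivAt (fun p : ℝ => 1 - p) (-1) p := (hasDerivAt_id p).const_sub 1
    exact ((hq.fun_pow (m + 2)).add (((hq.fun_pow (m + 1)).const_mul ((m + 2 : ℕ) : ℝ)).mul
      (hasDerivAt_id' p))).congr_deriv (by push_cast; ring)
  refine antitoneOn_of_deriv_nonpos (convex_Icc 0 1) ?_ ?_ ?_
  · exact fun p _ => (hderiv p).continuousAt.continuousWithinAt
  · exact fun p _ => (hderiv p).differentiableAt.differentiableWithinAt
  · intro p hp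
    rw [interior_Icc] at hp
    rw [(hderiv p).deriv, neg_nonpos]
    have : 0 ≤ 1 - p := by linarith [hp.2]
    have : 0 ≤ p := hp.1.le
    positivity

theorem binomialProbLeOne_inv_natCast {n : ℕ} (hn : 1 ≤ n) :
    binomialProbLeOne n (n : ℝ)⁻¹ = (1 - (n : ℝ)⁻¹) ^ (n - 1) * (2 - (n : ℝ)⁻¹) := by
  obtain ⟨m, rfl⟩ : ∃ m, n = m + 1 := ⟨n - 1, by omega⟩
  have : ((m + 1 : ℕ) : ℝ) ≠ 0 := by positivity
  simp only [binomialProbLeOne, Nat.add_sub_cancel, pow_succ]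
  field_simp
  ring

theorem binomialProbLeOne_inv_natCast_lt {n : ℕ} (hn : 3 ≤ n) :
    binomialProbLeOne n (n : ℝ)⁻¹ < 3 / 4 := by
  obtain ⟨m, rfl⟩ : ∃ m, n = m + 1 := ⟨n - 1, by omega⟩
  have hm : (2 : ℝ) ≤ m := by exact_mod_cast (by omega : 2 ≤ m)
  have hbase : 1 - ((m + 1 : ℕ) : ℝ)⁻¹ = (1 + (m : ℝ)⁻¹)⁻¹ := by
    push_cast; field_simp; ring
  rw [binomialProbLeOne_inv_natCast (by omega), hbase, Nat.add_sub_cancel, inv_pow]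
  have hcubic := binomial_cubic_le_one_add_pow (inv_nonneg.2 (by linarith : (0 : ℝ) ≤ m)) m
  have hpos : 0 < (1 + (m : ℝ)⁻¹) ^ m := by positivity
  rw [inv_mul_lt_iff₀ hpos]
  have hbound : 2 - ((m + 1 : ℕ) : ℝ)⁻¹ < 3 / 4 * (1 + m * (m : ℝ)⁻¹
      + m * (m - 1) / 2 * (m : ℝ)⁻¹ ^ 2 + m * (m - 1) * (m - 2) / 6 * (m : ℝ)⁻¹ ^ 3) := by
    push_cast
    field_simp
    nlinarith
  linarith

theorem binomialProbLeOne_lt {n : ℕ} (hn : 3 ≤ n) {p : ℝ} (hp1 : p ≤ 1)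
    (h1 : 1 ≤ (n : ℝ) * p) :
    binomialProbLeOne n p < 3 / 4 := by
  have hn0 : (0 : ℝ) < n := by positivity
  have hinv : (n : ℝ)⁻¹ ≤ p := by rw [inv_le_iff_one_le_mul₀' hn0]; exact h1
  have hinv1 : (n : ℝ)⁻¹ ≤ 1 :=
    inv_le_one_of_one_le₀ (by exact_mod_cast (by omega : 1 ≤ n))
  calc binomialProbLeOne n p
      ≤ binomialProbLeOne n (n : ℝ)⁻¹ :=
        binomialProbLeOne_antitoneOn (by omega) ⟨by positivity, hinv1⟩
          ⟨(inv_nonneg.2 hn0.le).trans hinv, hp1⟩ hinv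
    _ < 3 / 4 := binomialProbLeOne_inv_natCast_lt hn

theorem binomial_prob_gt_mean_case_np_in_one_two_general
    (n : ℕ) (hn : 3 ≤ n) (p : ℝ) (hp1 : p ≤ 1)
    (h1 : 1 ≤ (n : ℝ) * p) (h2 : (n : ℝ) * p < 2) :
    (∑ k ∈ (Finset.range (n + 1)).filter (fun k : ℕ => (n : ℝ) * p < (k : ℝ)),
        (n.choose k : ℝ) * p ^ k * (1 - p) ^ (n - k))
      = 1 - (1 - p) ^ n - n * (1 - p) ^ (n - 1) * p ∧
    (1 : ℝ) / 4 < 1 - (1 - p) ^ n - n * (1 - p) ^ (n - 1) * p := by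
  refine ⟨?_, ?_⟩
  · rw [filter_range_lt_natCast_eq_Ico_two _ h1 h2, sum_Ico_two_choose_mul_pow_mul_pow]
  · have h := binomialProbLeOne_lt hn hp1 h1
    unfold binomialProbLeOne at h
    linarith

/-- If `n ≥ 3` and `1 ≤ n p < 2`, then
`P(X > n p) = 1 - (1-p)^n - n (1-p)^{n-1} p > 1/4`. -/
theorem binomial_prob_gt_mean_case_np_in_one_two
    (n : ℕ) (hn : 3 ≤ n) (p : ℝ) (hp0 : 0 ≤ p) (hp1 : p ≤ 1)
    (h1 : 1 ≤ (n : ℝ) * p) (h2 : (n : ℝ) * p < 2) :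
    (∑ k ∈ (Finset.range (n + 1)).filter (fun k : ℕ => (n : ℝ) * p < (k : ℝ)),
        (n.choose k : ℝ) * p ^ k * (1 - p) ^ (n - k))
      = 1 - (1 - p) ^ n - n * (1 - p) ^ (n - 1) * p ∧
    (1 : ℝ) / 4 < 1 - (1 - p) ^ n - n * (1 - p) ^ (n - 1) * p :=
  binomial_prob_gt_mean_case_np_in_one_two_general n hn p hp1 h1 h2
end

section
/- The function g(x) := (2 − 1/x)(1 − 1/x)^{x−1} is strictly decreasing in the real variable x on [3, ∞), with limit 2/e as x → ∞; moreover, ln g(x) is convex on [3, ∞), its second derivative being 1/((2x−1)^2 (x−1) x) > 0. In particular, g(x) ≤ g(3) = 20/27 for all x ≥ 3, so that 1 − g(x) ≥ 7/27 > 1/4 for all x ≥ 3. -/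
/-- The function `g(x) = (2 - 1/x)(1 - 1/x)^{x-1}` (with real exponent, i.e.
`(1-1/x)^{x-1} = exp((x-1) ln(1-1/x))`). -/
noncomputable def gFun (x : ℝ) : ℝ := (2 - 1 / x) * Real.exp ((x - 1) * Real.log (1 - 1 / x))

/-! On `(1, ∞)` both factors of `g` are positive, so `log g = log (2 - 1/x) + (x - 1) log (1 - 1/x)`.
Its derivative `2/(2x - 1) + log (1 - 1/x)` has derivative `1/((2x - 1)² (x - 1) x) > 0`, so it is
strictly increasing; as it tends to `0` at `∞`, it is negative, and `g` is strictly decreasing on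
`(1, ∞)`. The limit `2/e` comes from `x log (1 - 1/x) → -1`. -/

open Real Filter Set Topology

noncomputable def logGFun (x : ℝ) : ℝ := log (2 - 1 / x) + (x - 1) * log (1 - 1 / x)

noncomputable def logGFunDeriv (x : ℝ) : ℝ := 2 / (2 * x - 1) + log (1 - 1 / x)

noncomputable def logGFunDeriv2 (x : ℝ) : ℝ := 1 / ((2 * x - 1) ^ 2 * (x - 1) * x)

lemma sub_one_div_pos {c x : ℝ} (hc : 1 ≤ c) (hx : 1 < x) : 0 < c - 1 / x := by
  have : 1 / x < 1 := (div_lt_one (by linarith)).2 hx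
  linarith

lemma gFun_eq_exp_logGFun {x : ℝ} (hx : 1 < x) : gFun x = exp (logGFun x) := by
  rw [logGFun, exp_add, exp_log (sub_one_div_pos one_le_two hx), gFun]

lemma log_gFun {x : ℝ} (hx : 1 < x) : log (gFun x) = logGFun x := by
  rw [gFun_eq_exp_logGFun hx, log_exp]

lemma log_gFun_eventuallyEq {x : ℝ} (hx : 1 < x) :
    (fun y => log (gFun y)) =ᶠ[𝓝 x] logGFun :=
  eventually_of_mem (Ioi_mem_nhds hx) fun _ hy => log_gFun hy

lemma hasDerivAt_log_sub_one_div {c x : ℝ} (hx : x ≠ 0) (hcx : c * x - 1 ≠ 0) :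
    HasDerivAt (fun y => log (c - 1 / y)) (1 / (x * (c * x - 1))) x := by
  have hinv : HasDerivAt (fun y : ℝ => c - 1 / y) (1 / x ^ 2) x := by
    simpa [one_div] using (hasDerivAt_inv hx).const_sub c
  have hc : c - 1 / x ≠ 0 := by
    rwa [sub_div' hx, div_ne_zero_iff, and_iff_left hx]
  refine (hinv.log hc).congr_deriv ?_
  field_simp

lemma hasDerivAt_logGFun {x : ℝ} (hx : 1 < x) : HasDerivAt logGFun (logGFunDeriv x) x := by
  have hx0 : x ≠ 0 := by positivity
  have h2x : 2 * x - 1 ≠ 0 := by linarith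
  have hx1 : 1 * x - 1 ≠ 0 := by linarith
  have hsum : 1 / (x * (2 * x - 1)) + 1 / x = 2 / (2 * x - 1) := by
    rw [div_add_div _ _ (mul_ne_zero hx0 h2x) hx0, div_eq_div_iff (by simp [*]) h2x]
    ring
  have hcancel : (x - 1) * (1 / (x * (1 * x - 1))) = 1 / x := by
    rw [one_mul] at hx1 ⊢
    field_simp
  refine ((hasDerivAt_log_sub_one_div hx0 h2x).add
    (((hasDerivAt_id' x).sub_const 1).mul (hasDerivAt_log_sub_one_div hx0 hx1))).congr_deriv ?_
  rw [hcancel, logGFunDeriv, ← hsum]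
  ring

lemma hasDerivAt_logGFunDeriv {x : ℝ} (hx : 1 < x) :
    HasDerivAt logGFunDeriv (logGFunDeriv2 x) x := by
  have hx0 : x ≠ 0 := by positivity
  have h2x : 2 * x - 1 ≠ 0 := by linarith
  have hx1 : 1 * x - 1 ≠ 0 := by linarith
  have := (((hasDerivAt_id' x).const_mul 2).sub_const 1).inv h2x |>.const_mul 2 |>.add
    (hasDerivAt_log_sub_one_div hx0 hx1)
  refine this.congr_deriv ?_
  simp only [one_mul] at hx1 ⊢
  rw [logGFunDeriv2]
  field_simp
  ring

lemma logGFunDeriv2_pos {x : ℝ} (hx : 1 < x) : 0 < logGFunDeriv2 x := by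
  have : 0 < 2 * x - 1 := by linarith
  have : 0 < x - 1 := by linarith
  have : 0 < x := by linarith
  unfold logGFunDeriv2
  positivity

lemma deriv_log_gFun_eventuallyEq {x : ℝ} (hx : 1 < x) :
    deriv (fun y => log (gFun y)) =ᶠ[𝓝 x] logGFunDeriv :=
  eventually_of_mem (Ioi_mem_nhds hx) fun _ hy =>
    (log_gFun_eventuallyEq hy).deriv_eq.trans (hasDerivAt_logGFun hy).deriv

lemma deriv_deriv_log_gFun {x : ℝ} (hx : 1 < x) :
    deriv (deriv fun y => log (gFun y)) x = logGFunDeriv2 x :=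
  (deriv_log_gFun_eventuallyEq hx).deriv_eq.trans (hasDerivAt_logGFunDeriv hx).deriv

lemma strictMonoOn_logGFunDeriv : StrictMonoOn logGFunDeriv (Ioi 1) := by
  refine strictMonoOn_of_deriv_pos (convex_Ioi 1)
    (fun x hx => (hasDerivAt_logGFunDeriv hx).continuousAt.continuousWithinAt) fun x hx => ?_
  rw [interior_Ioi] at hx
  rw [(hasDerivAt_logGFunDeriv hx).deriv]
  exact logGFunDeriv2_pos hx

lemma tendsto_const_sub_one_div_atTop (c : ℝ) :
    Tendsto (fun x : ℝ => c - 1 / x) atTop (𝓝 c) := by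
  simpa using tendsto_const_nhds.sub (tendsto_inv_atTop_zero (𝕜 := ℝ))

lemma tendsto_logGFunDeriv_atTop : Tendsto logGFunDeriv atTop (𝓝 0) := by
  have h2x : Tendsto (fun x : ℝ => 2 * x - 1) atTop atTop :=
    tendsto_atTop_add_const_right _ (-1) (tendsto_id.const_mul_atTop two_pos)
  have := ((tendsto_const_nhds (x := (2 : ℝ))).div_atTop h2x).add
    ((tendsto_const_sub_one_div_atTop 1).log one_ne_zero)
  rwa [log_one, add_zero] at this

lemma StrictMonoOn.lt_of_tendsto_atTop {f : ℝ → ℝ} {a l x : ℝ} (hf : StrictMonoOn f (Ioi a))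
    (hl : Tendsto f atTop (𝓝 l)) (hx : a < x) : f x < l := by
  have hx1 : a < x + 1 := by linarith
  refine (hf hx hx1 (lt_add_one x)).trans_le (ge_of_tendsto hl ?_)
  filter_upwards [eventually_ge_atTop (x + 1)] with y hy
  exact hf.monotoneOn hx1 (hx1.trans_le hy) hy

lemma strictAntiOn_logGFun : StrictAntiOn logGFun (Ioi 1) := by
  refine strictAntiOn_of_deriv_neg (convex_Ioi 1)
    (fun x hx => (hasDerivAt_logGFun hx).continuousAt.continuousWithinAt) fun x hx => ?_
  rw [interior_Ioi] at hx
  rw [(hasDerivAt_logGFun hx).deriv]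
  exact strictMonoOn_logGFunDeriv.lt_of_tendsto_atTop tendsto_logGFunDeriv_atTop hx

lemma strictAntiOn_gFun : StrictAntiOn gFun (Ioi 1) :=
  (exp_strictMono.comp_strictAntiOn strictAntiOn_logGFun).congr fun _ hx =>
    (gFun_eq_exp_logGFun hx).symm

lemma convexOn_log_gFun : ConvexOn ℝ (Ioi 1) fun x => log (gFun x) := by
  have hderiv : EqOn logGFunDeriv (deriv logGFun) (Ioi 1) := fun _ hx =>
    (hasDerivAt_logGFun hx).deriv.symm
  refine (MonotoneOn.convexOn_of_deriv (convex_Ioi 1)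
    (fun x hx => (hasDerivAt_logGFun hx).continuousAt.continuousWithinAt) ?_ ?_).congr
    fun _ hx => (log_gFun hx).symm
  · rw [interior_Ioi]
    exact fun x hx => (hasDerivAt_logGFun hx).differentiableAt.differentiableWithinAt
  · rw [interior_Ioi]
    exact strictMonoOn_logGFunDeriv.monotoneOn.congr hderiv

lemma tendsto_gFun_atTop : Tendsto gFun atTop (𝓝 (2 / exp 1)) := by
  have hexp : Tendsto (fun x : ℝ => (x - 1) * log (1 - 1 / x)) atTop (𝓝 (-1)) := by
    have := (tendsto_mul_log_one_add_div_atTop (-1)).sub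
      ((tendsto_const_sub_one_div_atTop 1).log one_ne_zero)
    simp only [log_one, sub_zero, neg_div, ← sub_eq_add_neg] at this
    exact this.congr fun x => by ring
  have := (tendsto_const_sub_one_div_atTop 2).mul ((continuous_exp.tendsto _).comp hexp)
  rwa [exp_neg, ← div_eq_mul_inv] at this

lemma gFun_three : gFun 3 = 20 / 27 := by
  have : exp (2 * log (2 / 3)) = (2 / 3) ^ 2 := by
    rw [← exp_log (by norm_num : (0 : ℝ) < (2 / 3) ^ 2), log_pow, Nat.cast_ofNat]
  norm_num [gFun, this]

/-- `g` is strictly decreasing on `[3, ∞)` with limit `2/e` at `∞`; `ln g` is convex on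
`[3, ∞)` with second derivative `1/((2x-1)² (x-1) x) > 0`; in particular, for all `x ≥ 3`,
`g(x) ≤ g(3) = 20/27`, so `1 - g(x) ≥ 7/27 > 1/4`. -/
theorem gFun_properties :
    StrictAntiOn gFun (Set.Ici 3) ∧
    Filter.Tendsto gFun Filter.atTop (nhds (2 / Real.exp 1)) ∧
    ConvexOn ℝ (Set.Ici 3) (fun x => Real.log (gFun x)) ∧
    (∀ x : ℝ, 3 ≤ x →
      deriv (deriv (fun y => Real.log (gFun y))) x
        = 1 / ((2 * x - 1) ^ 2 * (x - 1) * x) ∧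
      0 < 1 / ((2 * x - 1) ^ 2 * (x - 1) * x)) ∧
    gFun 3 = 20 / 27 ∧
    (∀ x : ℝ, 3 ≤ x → gFun x ≤ 20 / 27) ∧
    (∀ x : ℝ, 3 ≤ x → 7 / 27 ≤ 1 - gFun x) ∧
    (1 : ℝ) / 4 < 7 / 27 := by
  have hIci : Ici (3 : ℝ) ⊆ Ioi 1 := Ici_subset_Ioi.2 (by norm_num)
  have hle : ∀ x : ℝ, 3 ≤ x → gFun x ≤ 20 / 27 := fun x hx =>
    gFun_three ▸ (strictAntiOn_gFun.mono hIci).antitoneOn self_mem_Ici hx hx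
  refine ⟨strictAntiOn_gFun.mono hIci, tendsto_gFun_atTop,
    convexOn_log_gFun.subset hIci (convex_Ici 3), fun x hx => ?_, gFun_three, hle,
    fun x hx => by linarith [hle x hx], by norm_num⟩
  have hx1 : 1 < x := hIci hx
  exact ⟨deriv_deriv_log_gFun hx1, logGFunDeriv2_pos hx1⟩
end

section
/- Let X be a binomial random variable with parameters n and p, where n ≥ 3 is an integer and 1 < n(1−p) ≤ 2 (equivalently, n − 2 ≤ n p < n − 1). Then P(X > n p) = P(X ≥ n − 1) = p^n + n p^{n−1}(1−p) > 1/4. -/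
/-!
Since `n - 2 ≤ n p < n - 1`, the event `X > n p` is `X ≥ n - 1`, whose probability
`g(p) = n p^(n-1) - (n-1) p^n` has derivative `n (n-1) p^(n-2) (1-p) ≥ 0` on `[0, 1]`.
Hence `g(p) ≥ g(a)` for `a = (n-2)/n`, and `g(a) = a^(n-2) (n-2)(3n-2)/n²`.
From `(1 + 2/(n-2))^(n-2) ≤ e²` we get `a^(n-2) ≥ e⁻²`, and `e⁻² (n-2)(3n-2)/n² > 1/4`
as soon as `n ≥ 7`; the cases `n ≤ 6` are checked numerically.
-/

open Finset Real

theorem filter_range_lt_natCast_eq_Icc (n j : ℕ) {x : ℝ} (hjx : (j : ℝ) - 1 ≤ x) (hxj : x < j) :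
    (range (n + 1)).filter (fun k : ℕ => x < k) = Icc j n := by
  ext k
  have hk : x < k ↔ j ≤ k := by
    constructor
    · intro h
      by_contra! hkj
      have : (k : ℝ) + 1 ≤ j := by exact_mod_cast hkj
      linarith
    · intro h
      have : (j : ℝ) ≤ k := by exact_mod_cast h
      linarith
  simp only [mem_filter, mem_range, mem_Icc, hk]
  omega

theorem sum_Icc_pred_choose_mul_pow_mul_pow {R : Type*} [CommSemiring R] {n : ℕ} (hn : 1 ≤ n)
    (p q : R) :
    ∑ k ∈ Icc (n - 1) n, (n.choose k : R) * p ^ k * q ^ (n - k) = p ^ n + n * p ^ (n - 1) * q := by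
  obtain ⟨m, rfl⟩ : ∃ m, n = m + 1 := ⟨n - 1, by omega⟩
  have hIcc : Icc m (m + 1) = {m, m + 1} := by
    ext k
    simp only [mem_Icc, mem_insert, mem_singleton]
    omega
  rw [Nat.add_sub_cancel, hIcc, sum_pair (by omega), Nat.choose_succ_self_right, Nat.choose_self,
    Nat.sub_self, Nat.add_sub_cancel_left]
  push_cast
  ring

theorem monotoneOn_pow_add_mul_pow_mul_one_sub (n : ℕ) :
    MonotoneOn (fun x : ℝ => x ^ n + n * x ^ (n - 1) * (1 - x)) (Set.Icc 0 1) := by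
  rcases n with _ | m
  · simpa using monotoneOn_const
  have hderiv (x : ℝ) : HasDerivAt (fun x : ℝ => x ^ (m + 1) + (m + 1 : ℕ) * x ^ m * (1 - x))
      ((m + 1 : ℕ) * m * x ^ (m - 1) * (1 - x)) x := by
    refine ((hasDerivAt_pow (m + 1) x).add (((hasDerivAt_pow m x).const_mul ((m + 1 : ℕ) : ℝ)).mul
      ((hasDerivAt_id' x).const_sub 1))).congr_deriv ?_
    rcases m with _ | m
    · simp
    · simp only [Nat.add_sub_cancel, pow_succ]
      ring
  refine monotoneOn_of_deriv_nonneg (convex_Icc 0 1) (by fun_prop)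
    (fun x _ => (hderiv x).differentiableAt.differentiableWithinAt) fun x hx => ?_
  rw [interior_Icc] at hx
  simp only [Nat.add_sub_cancel]
  rw [(hderiv x).deriv]
  have : 0 ≤ x := hx.1.le
  have : 0 ≤ 1 - x := by linarith [hx.2]
  positivity

theorem exp_neg_two_le_div_add_two_pow (k : ℕ) : exp (-2) ≤ ((k : ℝ) / (k + 2)) ^ k := by
  rcases Nat.eq_zero_or_pos k with rfl | hk
  · simp
  have hk' : (0 : ℝ) < k := by exact_mod_cast hk
  have hbase : exp (-(2 / k)) ≤ k / (k + 2) := by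
    rw [exp_neg, inv_le_comm₀ (exp_pos _) (by positivity), inv_div]
    calc ((k : ℝ) + 2) / k = 2 / k + 1 := by field_simp; ring
      _ ≤ exp (2 / k) := add_one_le_exp _
  calc exp (-2) = exp (-(2 / k)) ^ k := by rw [← exp_nat_mul]; field_simp
    _ ≤ ((k : ℝ) / (k + 2)) ^ k := by gcongr

theorem one_quarter_lt_pow_add_mul_pow_mul_one_sub {n : ℕ} (hn : 3 ≤ n) :
    (1 : ℝ) / 4 < ((n - 2) / n : ℝ) ^ n + n * ((n - 2) / n : ℝ) ^ (n - 1) * (1 - (n - 2) / n) := by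
  obtain ⟨k, rfl⟩ : ∃ k, n = k + 2 := ⟨n - 2, by omega⟩
  have hk : 1 ≤ k := by omega
  have hval : ((((k + 2 : ℕ) : ℝ) - 2) / (k + 2 : ℕ)) ^ (k + 2)
        + (k + 2 : ℕ) * ((((k + 2 : ℕ) : ℝ) - 2) / (k + 2 : ℕ)) ^ (k + 2 - 1)
          * (1 - (((k + 2 : ℕ) : ℝ) - 2) / (k + 2 : ℕ))
      = ((k : ℝ) / (k + 2)) ^ k * (k * (3 * k + 4) / (k + 2) ^ 2) := by
    rw [Nat.add_sub_assoc (by norm_num), pow_succ, pow_succ, pow_succ]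
    push_cast
    field_simp
    ring
  rw [hval]
  rcases lt_or_ge k 5 with hsmall | hlarge
  · interval_cases k <;> norm_num
  have hexp : exp 2 < 7.39 := by
    have h2 : exp 2 = exp 1 ^ 2 := by rw [← exp_nat_mul]; norm_num
    rw [h2]
    nlinarith [exp_pos 1, exp_one_lt_d9]
  have hk5 : (5 : ℝ) ≤ k := by exact_mod_cast hlarge
  have hfrac : exp 2 / 4 < k * (3 * k + 4) / (k + 2) ^ 2 := by
    rw [div_lt_div_iff₀ (by norm_num) (by positivity)]
    nlinarith
  calc (1 : ℝ) / 4 = exp (-2) * (exp 2 / 4) := by rw [exp_neg]; field_simp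
    _ < exp (-2) * (k * (3 * k + 4) / (k + 2) ^ 2) := by gcongr
    _ ≤ ((k : ℝ) / (k + 2)) ^ k * (k * (3 * k + 4) / (k + 2) ^ 2) := by
      gcongr
      exact exp_neg_two_le_div_add_two_pow k

theorem binomial_prob_gt_mean_case_nq_in_one_two_general
    (n : ℕ) (hn : 3 ≤ n) (p : ℝ)
    (h1 : 1 < (n : ℝ) * (1 - p)) (h2 : (n : ℝ) * (1 - p) ≤ 2) :
    (∑ k ∈ (Finset.range (n + 1)).filter (fun k : ℕ => (n : ℝ) * p < (k : ℝ)),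
        (n.choose k : ℝ) * p ^ k * (1 - p) ^ (n - k))
      = ∑ k ∈ Finset.Icc (n - 1) n, (n.choose k : ℝ) * p ^ k * (1 - p) ^ (n - k) ∧
    (∑ k ∈ Finset.Icc (n - 1) n, (n.choose k : ℝ) * p ^ k * (1 - p) ^ (n - k))
      = p ^ n + n * p ^ (n - 1) * (1 - p) ∧
    (1 : ℝ) / 4 < p ^ n + n * p ^ (n - 1) * (1 - p) := by
  have hn3 : (3 : ℝ) ≤ n := by exact_mod_cast hn
  have hpred : ((n - 1 : ℕ) : ℝ) = n - 1 := by rw [Nat.cast_sub (by omega), Nat.cast_one]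
  refine ⟨?_, sum_Icc_pred_choose_mul_pow_mul_pow (by omega) p (1 - p), ?_⟩
  · rw [filter_range_lt_natCast_eq_Icc n (n - 1) (by rw [hpred]; linarith) (by rw [hpred]; linarith)]
  have ha0 : 0 ≤ ((n - 2) / n : ℝ) := div_nonneg (by linarith) (by linarith)
  have hap : ((n - 2) / n : ℝ) ≤ p := by rw [div_le_iff₀ (by linarith)]; linarith
  have hp1 : p ≤ 1 := by nlinarith
  calc (1 : ℝ) / 4 < ((n - 2) / n : ℝ) ^ n + n * ((n - 2) / n : ℝ) ^ (n - 1) * (1 - (n - 2) / n) :=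
        one_quarter_lt_pow_add_mul_pow_mul_one_sub hn
    _ ≤ p ^ n + n * p ^ (n - 1) * (1 - p) :=
        monotoneOn_pow_add_mul_pow_mul_one_sub n ⟨ha0, hap.trans hp1⟩ ⟨ha0.trans hap, hp1⟩ hap

/-- If `n ≥ 3` and `1 < n(1-p) ≤ 2` (equivalently `n - 2 ≤ n p < n - 1`), then
`P(X > n p) = P(X ≥ n - 1) = p^n + n p^{n-1}(1-p) > 1/4`. -/
theorem binomial_prob_gt_mean_case_nq_in_one_two
    (n : ℕ) (hn : 3 ≤ n) (p : ℝ) (hp0 : 0 ≤ p) (hp1 : p ≤ 1)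
    (h1 : 1 < (n : ℝ) * (1 - p)) (h2 : (n : ℝ) * (1 - p) ≤ 2) :
    (∑ k ∈ (Finset.range (n + 1)).filter (fun k : ℕ => (n : ℝ) * p < (k : ℝ)),
        (n.choose k : ℝ) * p ^ k * (1 - p) ^ (n - k))
      = ∑ k ∈ Finset.Icc (n - 1) n, (n.choose k : ℝ) * p ^ k * (1 - p) ^ (n - k) ∧
    (∑ k ∈ Finset.Icc (n - 1) n, (n.choose k : ℝ) * p ^ k * (1 - p) ^ (n - k))
      = p ^ n + n * p ^ (n - 1) * (1 - p) ∧
    (1 : ℝ) / 4 < p ^ n + n * p ^ (n - 1) * (1 - p) :=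
  binomial_prob_gt_mean_case_nq_in_one_two_general n hn p h1 h2
end

section
/- Let X be a binomial random variable with parameters n and p, where n ≥ 2 is an integer and 0 < n(1−p) ≤ 1 (equivalently, n − 1 ≤ n p < n). Then P(X > n p) = P(X = n) = p^n ≥ (1 − 1/n)^n ≥ 1/4, and P(X > n p) = 1/4 only when n = 2 and p = 1/2. -/
/-!
Since `n - 1 ≤ n p < n`, the only outcome exceeding the mean is `k = n`, so the tail is `p ^ n`,
and `p ≥ 1 - 1/n` gives `p ^ n ≥ (1 - 1/n) ^ n`. The sequence `(1 - 1/n) ^ n` is strictly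
increasing for `n ≥ 1`, because `1 - 1/n = (1 - 1/(n+1)) (1 - 1/n²)` and
`(1 - 1/n²) ^ n ≤ e^(-1/n) < n/(n+1)`; its value at `n = 2` is `1/4`, which gives both the
bound and the equality case.
-/

open Finset Real

theorem one_sub_one_div_pow_lt_succ {n : ℕ} (hn : n ≠ 0) :
    (1 - 1 / (n : ℝ)) ^ n < (1 - 1 / ((n + 1 : ℕ) : ℝ)) ^ (n + 1) := by
  have hn1 : (1 : ℝ) ≤ n := by exact_mod_cast Nat.one_le_iff_ne_zero.mpr hn
  set b : ℝ := 1 - 1 / ((n + 1 : ℕ) : ℝ) with hb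
  have hb_eq : b = (1 + 1 / (n : ℝ))⁻¹ := by rw [hb]; push_cast; field_simp; ring
  have hb0 : 0 < b := by rw [hb_eq]; positivity
  have hfactor : 1 - 1 / (n : ℝ) = b * (1 - (1 / n) / n) := by
    rw [hb_eq]; field_simp; ring
  have hexp_le : (1 - (1 / n) / n : ℝ) ^ n ≤ exp (-(1 / n)) :=
    one_sub_div_pow_le_exp_neg ((div_le_one₀ (by positivity)).mpr hn1 |>.trans hn1)
  have hexp_lt : exp (-(1 / n)) < b := by
    rw [exp_neg, hb_eq]
    exact inv_strictAnti₀ (by positivity)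
      (by simpa [add_comm] using add_one_lt_exp (by positivity : (1 / n : ℝ) ≠ 0))
  calc (1 - 1 / (n : ℝ)) ^ n = b ^ n * (1 - (1 / n) / n) ^ n := by rw [hfactor, mul_pow]
    _ ≤ b ^ n * exp (-(1 / n)) := by gcongr
    _ < b ^ n * b := by gcongr
    _ = b ^ (n + 1) := (pow_succ b n).symm

theorem strictMonoOn_one_sub_one_div_pow :
    StrictMonoOn (fun n : ℕ => (1 - 1 / (n : ℝ)) ^ n) (Set.Ici 1) :=
  strictMonoOn_of_lt_add_one Set.ordConnected_Ici fun _ _ hn _ =>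
    one_sub_one_div_pow_lt_succ (Nat.one_le_iff_ne_zero.mp hn)

theorem quarter_le_one_sub_one_div_pow {n : ℕ} (hn : 2 ≤ n) : 1 / 4 ≤ (1 - 1 / (n : ℝ)) ^ n := by
  calc (1 : ℝ) / 4 = (1 - 1 / ((2 : ℕ) : ℝ)) ^ 2 := by norm_num
    _ ≤ (1 - 1 / (n : ℝ)) ^ n := (strictMonoOn_one_sub_one_div_pow.le_iff_le
        (Set.mem_Ici.mpr (by norm_num)) (Set.mem_Ici.mpr (by omega))).mpr hn

theorem eq_two_of_one_sub_one_div_pow_le_quarter {n : ℕ} (hn : 2 ≤ n)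
    (h : (1 - 1 / (n : ℝ)) ^ n ≤ 1 / 4) : n = 2 := by
  have h2 : (1 - 1 / ((2 : ℕ) : ℝ)) ^ 2 = 1 / 4 := by norm_num
  exact le_antisymm ((strictMonoOn_one_sub_one_div_pow.le_iff_le (Set.mem_Ici.mpr (by omega))
    (Set.mem_Ici.mpr (by norm_num))).mp (h.trans h2.ge)) hn

theorem filter_range_lt_natCast_eq_singleton {n : ℕ} {x : ℝ} (hx₁ : (n : ℝ) - 1 ≤ x)
    (hx₂ : x < n) : (range (n + 1)).filter (fun k : ℕ => x < k) = {n} := by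
  ext k
  simp only [mem_filter, mem_range, mem_singleton]
  constructor
  · rintro ⟨hk, hxk⟩
    have : n < k + 1 := by exact_mod_cast (by linarith : (n : ℝ) < k + 1)
    omega
  · rintro rfl
    exact ⟨Nat.lt_add_one _, hx₂⟩

theorem sum_binomial_filter_gt_eq_pow {n : ℕ} {p : ℝ} (hp₁ : (n : ℝ) - 1 ≤ n * p)
    (hp₂ : n * p < n) :
    (∑ k ∈ (range (n + 1)).filter (fun k : ℕ => (n : ℝ) * p < (k : ℝ)),
        (n.choose k : ℝ) * p ^ k * (1 - p) ^ (n - k)) = p ^ n := by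
  simp [filter_range_lt_natCast_eq_singleton hp₁ hp₂]

theorem binomial_prob_gt_mean_case_nq_le_one_general
    (n : ℕ) (hn : 2 ≤ n) (p : ℝ)
    (h1 : 0 < (n : ℝ) * (1 - p)) (h2 : (n : ℝ) * (1 - p) ≤ 1) :
    (∑ k ∈ (Finset.range (n + 1)).filter (fun k : ℕ => (n : ℝ) * p < (k : ℝ)),
        (n.choose k : ℝ) * p ^ k * (1 - p) ^ (n - k)) = p ^ n ∧
    (1 - 1 / (n : ℝ)) ^ n ≤ p ^ n ∧
    (1 : ℝ) / 4 ≤ (1 - 1 / (n : ℝ)) ^ n ∧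
    (p ^ n = 1 / 4 → n = 2 ∧ p = 1 / 2) := by
  have hn0 : (0 : ℝ) < n := by positivity
  have hp_ge : 1 - 1 / (n : ℝ) ≤ p := by
    rw [sub_le_comm, le_div_iff₀ hn0, mul_comm]; exact h2
  have hpow_le : (1 - 1 / (n : ℝ)) ^ n ≤ p ^ n :=
    pow_le_pow_left₀ (by rw [sub_nonneg, div_le_one hn0]; exact_mod_cast (by omega : 1 ≤ n)) hp_ge n
  refine ⟨sum_binomial_filter_gt_eq_pow (by linarith) (by linarith), hpow_le,
    quarter_le_one_sub_one_div_pow hn, fun hquarter => ?_⟩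
  obtain rfl := eq_two_of_one_sub_one_div_pow_le_quarter hn (hquarter ▸ hpow_le)
  refine ⟨rfl, ?_⟩
  norm_num at hp_ge hquarter
  nlinarith

/-- If `n ≥ 2` and `0 < n(1-p) ≤ 1` (equivalently `n - 1 ≤ n p < n`), then
`P(X > n p) = P(X = n) = p^n ≥ (1 - 1/n)^n ≥ 1/4`, with `P(X > n p) = 1/4` only
when `n = 2` and `p = 1/2`. -/
theorem binomial_prob_gt_mean_case_nq_le_one
    (n : ℕ) (hn : 2 ≤ n) (p : ℝ) (hp1 : p ≤ 1)
    (h1 : 0 < (n : ℝ) * (1 - p)) (h2 : (n : ℝ) * (1 - p) ≤ 1) :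
    (∑ k ∈ (Finset.range (n + 1)).filter (fun k : ℕ => (n : ℝ) * p < (k : ℝ)),
        (n.choose k : ℝ) * p ^ k * (1 - p) ^ (n - k)) = p ^ n ∧
    (1 - 1 / (n : ℝ)) ^ n ≤ p ^ n ∧
    (1 : ℝ) / 4 ≤ (1 - 1 / (n : ℝ)) ^ n ∧
    (p ^ n = 1 / 4 → n = 2 ∧ p = 1 / 2) :=
  binomial_prob_gt_mean_case_nq_le_one_general n hn p h1 h2
end
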